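/- arXiv:2605.19094 — 4 statements merged into one kernel-verified Lean document; each statement's English description precedes it below -/
import Mathlib

section
/- Let x > 0 and let G be a d-regular graph on m vertices. Then there exists a set X of vertices with |X| ≤ x·m/(d+1) such that the number of vertices outside X and having no neighbor in X is at most e^{-x + (d+1)/m} · m. -/
open Finset

private def uncov {V : Type*} [Fintype V] [DecidableEq V]
    (G : SimpleGraph V) [DecidableRel G.Adj] (X : Finset V) : Finset V :=
  Finset.univ.filter (fun v => v ∉ X ∧ ∀ u ∈ X, ¬ G.Adj v u)

private lemma key_step {V : Type*} [Fintype V] [DecidableEq V]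
    (G : SimpleGraph V) [DecidableRel G.Adj] {d : ℕ}
    (hreg : G.IsRegularOfDegree d) [Nonempty V] (X : Finset V) :
    ∃ v : V, Fintype.card V * (uncov G (insert v X)).card + (d + 1) * (uncov G X).card
      ≤ Fintype.card V * (uncov G X).card := by
  classical
  set U := uncov G X with hU
  have hsum : ∑ v : V, (U.filter (fun u => u = v ∨ G.Adj v u)).card = (d + 1) * U.card := by
    simp only [Finset.card_filter]
    rw [Finset.sum_comm]
    have hin : ∀ u : V, (∑ v : V, if u = v ∨ G.Adj v u then 1 else 0) = d + 1 := by
      intro u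
      rw [← Finset.card_filter]
      have : (Finset.univ.filter (fun v => u = v ∨ G.Adj v u))
          = insert u (G.neighborFinset u) := by
        ext v
        simp [SimpleGraph.mem_neighborFinset, eq_comm, SimpleGraph.adj_comm]
      rw [this, Finset.card_insert_of_notMem (by simp), G.card_neighborFinset_eq_degree,
        hreg u]
    rw [Finset.sum_congr rfl (fun u _ => hin u), Finset.sum_const, smul_eq_mul, mul_comm]
  -- pigeonhole: some v covers many uncovered vertices
  have hpig : ∃ v : V, (d + 1) * U.card
      ≤ Fintype.card V * (U.filter (fun u => u = v ∨ G.Adj v u)).card := by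
    have h := Finset.exists_le_of_sum_le (s := (Finset.univ : Finset V))
      (f := fun _ => (d + 1) * U.card)
      (g := fun v => Fintype.card V * (U.filter (fun u => u = v ∨ G.Adj v u)).card)
      Finset.univ_nonempty ?_
    · obtain ⟨v, _, hv⟩ := h; exact ⟨v, hv⟩
    · simp only [Finset.sum_const, Finset.card_univ, smul_eq_mul, ← Finset.mul_sum, hsum]
      exact le_of_eq (by ring)
  obtain ⟨v, hv⟩ := hpig
  refine ⟨v, ?_⟩
  have hsub : uncov G (insert v X) ⊆ U.filter (fun u => ¬(u = v ∨ G.Adj v u)) := by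
    intro w hw
    simp only [uncov, Finset.mem_filter, Finset.mem_univ, true_and] at hw
    obtain ⟨hw1, hw2⟩ := hw
    have hwv : w ≠ v := fun h => hw1 (h ▸ Finset.mem_insert_self v X)
    have hwX : w ∉ X := fun h => hw1 (Finset.mem_insert_of_mem h)
    simp only [Finset.mem_filter, hU, uncov, Finset.mem_univ, true_and, not_or]
    refine ⟨⟨hwX, fun u hu => hw2 u (Finset.mem_insert_of_mem hu)⟩, hwv, ?_⟩
    intro hadj
    exact hw2 v (Finset.mem_insert_self v X) (G.adj_symm hadj)
  have h1 : (uncov G (insert v X)).card ≤ (U.filter (fun u => ¬(u = v ∨ G.Adj v u))).card :=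
    Finset.card_le_card hsub
  have h2 : (U.filter (fun u => u = v ∨ G.Adj v u)).card
      + (U.filter (fun u => ¬(u = v ∨ G.Adj v u))).card = U.card :=
    Finset.card_filter_add_card_filter_not _
  calc Fintype.card V * (uncov G (insert v X)).card + (d + 1) * U.card
      ≤ Fintype.card V * (U.filter (fun u => ¬(u = v ∨ G.Adj v u))).card
        + Fintype.card V * (U.filter (fun u => u = v ∨ G.Adj v u)).card :=
        Nat.add_le_add (Nat.mul_le_mul_left _ h1) hv
    _ = Fintype.card V * U.card := by rw [← Nat.mul_add, Nat.add_comm, h2]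

private lemma iter_bound {V : Type*} [Fintype V] [DecidableEq V]
    (G : SimpleGraph V) [DecidableRel G.Adj] {d : ℕ}
    (hreg : G.IsRegularOfDegree d) [Nonempty V]
    (hdm : d + 1 ≤ Fintype.card V) :
    ∀ k : ℕ, ∃ X : Finset V, X.card ≤ k ∧
      ((uncov G X).card : ℝ)
        ≤ (1 - ((d : ℝ) + 1) / (Fintype.card V)) ^ k * (Fintype.card V) := by
  classical
  have hM : (0 : ℝ) < Fintype.card V := by
    exact_mod_cast Fintype.card_pos
  have ht1 : (0 : ℝ) ≤ 1 - ((d : ℝ) + 1) / (Fintype.card V) := by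
    rw [sub_nonneg, div_le_one hM]
    exact_mod_cast hdm
  intro k
  induction k with
  | zero =>
    refine ⟨∅, le_refl _, ?_⟩
    rw [pow_zero, one_mul]
    exact_mod_cast Finset.card_le_card (Finset.filter_subset _ _) |>.trans
      (le_of_eq Finset.card_univ)
  | succ k ih =>
    obtain ⟨X, hXc, hXb⟩ := ih
    obtain ⟨v, hv⟩ := key_step G hreg X
    refine ⟨insert v X, le_trans (Finset.card_insert_le v X) (Nat.add_le_add_right hXc 1), ?_⟩
    have hv' : (Fintype.card V : ℝ) * (uncov G (insert v X)).card
        + ((d : ℝ) + 1) * (uncov G X).card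
        ≤ (Fintype.card V : ℝ) * (uncov G X).card := by exact_mod_cast hv
    have hstep : ((uncov G (insert v X)).card : ℝ)
        ≤ (1 - ((d : ℝ) + 1) / (Fintype.card V)) * (uncov G X).card := by
      have key : (1 - ((d : ℝ) + 1) / (Fintype.card V)) * ((uncov G X).card : ℝ)
          = ((Fintype.card V : ℝ) * (uncov G X).card
            - ((d : ℝ) + 1) * (uncov G X).card) / (Fintype.card V) := by
        field_simp
      rw [key, le_div_iff₀ hM]
      nlinarith [hv']
    calc ((uncov G (insert v X)).card : ℝ)
        ≤ (1 - ((d : ℝ) + 1) / (Fintype.card V)) * (uncov G X).card := hstep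
      _ ≤ (1 - ((d : ℝ) + 1) / (Fintype.card V))
          * ((1 - ((d : ℝ) + 1) / (Fintype.card V)) ^ k * (Fintype.card V)) :=
          mul_le_mul_of_nonneg_left hXb ht1
      _ = (1 - ((d : ℝ) + 1) / (Fintype.card V)) ^ (k + 1) * (Fintype.card V) := by ring

/-- existence of a small dominating-ish set in a regular graph. -/
theorem exists_small_set_few_uncovered {V : Type*} [Fintype V] [DecidableEq V]
    (G : SimpleGraph V) [DecidableRel G.Adj] (d m : ℕ)
    (hm : Fintype.card V = m) (hreg : G.IsRegularOfDegree d) (x : ℝ) (hx : 0 < x) :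
    ∃ X : Finset V, (X.card : ℝ) ≤ x * m / (d + 1) ∧
      (((Finset.univ.filter (fun v => v ∉ X ∧ ∀ u ∈ X, ¬ G.Adj v u)).card : ℝ)
        ≤ Real.exp (-x + (d + 1) / m) * m) := by
  classical
  rcases Nat.eq_zero_or_pos m with hm0 | hmpos
  · -- empty graph
    subst hm0
    have hV : (Finset.univ : Finset V) = ∅ := by
      rw [← Finset.card_eq_zero, Finset.card_univ, hm]
    refine ⟨∅, by simp, ?_⟩
    have : (Finset.univ.filter (fun v => v ∉ (∅ : Finset V) ∧
        ∀ u ∈ (∅ : Finset V), ¬ G.Adj v u)) = ∅ := by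
      rw [hV]; rfl
    rw [this]
    simp
  · have hne : Nonempty V := by
      rw [← Fintype.card_pos_iff, hm]; exact hmpos
    have hdm : d + 1 ≤ Fintype.card V := by
      rw [hm]
      have := G.degree_lt_card_verts (Classical.arbitrary V)
      rw [hreg (Classical.arbitrary V), hm] at this
      omega
    have hM : (0 : ℝ) < m := by exact_mod_cast hmpos
    have hd1 : (0 : ℝ) < (d : ℝ) + 1 := by positivity
    set t : ℝ := ((d : ℝ) + 1) / m with htdef
    have htpos : 0 < t := by positivity
    have ht1 : t ≤ 1 := by
      rw [htdef, div_le_one hM]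
      exact_mod_cast hm ▸ hdm
    set k : ℕ := ⌊x * m / ((d : ℝ) + 1)⌋₊ with hk
    obtain ⟨X, hXc, hXb⟩ := iter_bound G hreg hdm k
    refine ⟨X, ?_, ?_⟩
    · calc (X.card : ℝ) ≤ k := by exact_mod_cast hXc
        _ ≤ x * m / ((d : ℝ) + 1) := Nat.floor_le (by positivity)
    · have hcast : ((Fintype.card V : ℝ)) = (m : ℝ) := by exact_mod_cast hm
      rw [hm] at hXb
      have hXb' : ((uncov G X).card : ℝ) ≤ (1 - t) ^ k * m := hXb
      have h1t : (0 : ℝ) ≤ 1 - t := by linarith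
      have hexp1 : 1 - t ≤ Real.exp (-t) := by
        have := Real.add_one_le_exp (-t)
        linarith
      have hpow : (1 - t) ^ k ≤ Real.exp (-t) ^ k := pow_le_pow_left₀ h1t hexp1 k
      have hexpk : Real.exp (-t) ^ k = Real.exp ((k : ℝ) * (-t)) := by
        rw [Real.exp_nat_mul]
      have hkge : x / t - 1 ≤ (k : ℝ) := by
        have h2 : x * m / ((d : ℝ) + 1) = x / t := by
          rw [htdef]; field_simp
        have hfl := Nat.lt_floor_add_one (x * m / ((d : ℝ) + 1))
        rw [← hk, h2] at hfl
        linarith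
      have harg : (k : ℝ) * (-t) ≤ -x + t := by
        have h3 : t * (x / t - 1) ≤ t * k := mul_le_mul_of_nonneg_left hkge htpos.le
        have h4 : t * (x / t - 1) = x - t := by field_simp
        nlinarith
      calc ((Finset.univ.filter (fun v => v ∉ X ∧ ∀ u ∈ X, ¬ G.Adj v u)).card : ℝ)
          = ((uncov G X).card : ℝ) := rfl
        _ ≤ (1 - t) ^ k * m := hXb'
        _ ≤ Real.exp ((k : ℝ) * (-t)) * m := by
            rw [← hexpk]; exact mul_le_mul_of_nonneg_right hpow hM.le
        _ ≤ Real.exp (-x + t) * m :=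
            mul_le_mul_of_nonneg_right (Real.exp_le_exp.mpr harg) hM.le
        _ = Real.exp (-x + ((d : ℝ) + 1) / m) * m := by rw [htdef]
end

section
/- Fix q ≥ 2 and R ≥ 1. If X ⊆ [q]^{r'} and K₂ ⊆ [q]^r is a covering code of [q]^r with radius R, and \bar{N}(X) denotes the set of words of [q]^{r'} at Hamming distance greater than R from every word in X, then K = (X ⊕ [q]^r) ∪ (\bar{N}(X) ⊕ K₂) is a covering code of [q]^{r'+r} with radius R. -/
open Finset

/-- `(X ⊕ [q]^r) ∪ (N̄(X) ⊕ K₂)` is a covering code of radius `R`. -/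
theorem covering_of_union (q R r r' : ℕ) (hq : 2 ≤ q) (hR : 1 ≤ R)
    (X : Finset (Fin r' → Fin q)) (K₂ : Finset (Fin r → Fin q))
    (hK₂ : ∀ z : Fin r → Fin q, ∃ k ∈ K₂, hammingDist z k ≤ R)
    (Nbar : Finset (Fin r' → Fin q))
    (hN : ∀ w : Fin r' → Fin q, w ∈ Nbar ↔ ∀ a ∈ X, R < hammingDist w a) :
    ∀ z : (Fin r' → Fin q) × (Fin r → Fin q),
      ∃ k ∈ (X ×ˢ (Finset.univ : Finset (Fin r → Fin q))) ∪ (Nbar ×ˢ K₂),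
        hammingDist z.1 k.1 + hammingDist z.2 k.2 ≤ R := by
  intro z
  by_cases h : ∃ a ∈ X, hammingDist z.1 a ≤ R
  · obtain ⟨a, ha, hd⟩ := h
    exact ⟨(a, z.2), by simp [Finset.mem_union, Finset.mem_product, ha], by
      simpa using hd⟩
  · push_neg at h
    obtain ⟨k, hk, hd⟩ := hK₂ z.2
    refine ⟨(z.1, k), ?_, ?_⟩
    · simp only [Finset.mem_union, Finset.mem_product]
      exact Or.inr ⟨(hN z.1).2 fun a ha => h a ha, hk⟩
    · simpa using hd
end

section
/- For every q ≥ 2, n ≥ 1, y > 1, x > 0, with r = ⌊n/y⌋ and r' = n - r, the minimal covering density satisfies μ_q(n,R) ≤ x·V_q(n,R)/V_q(r',R) + e^{-x + V_q(r',R)/q^{r'}} · μ_q(r,R) · V_q(n,R)/V_q(r,R). -/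
/-! Write `n = r + s`. Choose `m = ⌊x q^s / V_s⌋` words `T` of `[q]^s` at random: a fixed
word misses all their radius-`R` balls with probability `(1 - V_s/q^s)^m ≤ e^{-x + V_s/q^s}`,
so some choice leaves at most `q^s e^{-x + V_s/q^s}` words `B` of `[q]^s` uncovered. With `K₀`
an optimal radius-`R` code of `[q]^r`, the code `[q]^r × T ∪ K₀ × B` covers `[q]^n`, and its
density is the claimed bound. -/

/-- Size of a Hamming ball of radius `R` in `[q]^n`. -/
def V (q n R : ℕ) : ℕ := ∑ i ∈ Finset.range (R + 1), (q - 1) ^ i * n.choose i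

/-- `K` is a covering code of `[q]^n` of radius `R`. -/
def IsCoveringCode (q n R : ℕ) (K : Finset (Fin n → Fin q)) : Prop :=
  ∀ z : Fin n → Fin q, ∃ k ∈ K, hammingDist z k ≤ R

/-- Minimal density of a covering code of `[q]^n` of radius `R`. -/
noncomputable def mu (q n R : ℕ) : ℝ :=
  sInf {d : ℝ | ∃ K : Finset (Fin n → Fin q), IsCoveringCode q n R K ∧
    d = (K.card : ℝ) * (V q n R : ℝ) / (q : ℝ) ^ n}

open Finset

section Hamming

variable {ι α : Type*} [Fintype ι] [DecidableEq ι] [Fintype α] [DecidableEq α]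

theorem card_filter_disagreement_eq (b : ι → α) (s : Finset ι) :
    #{w : ι → α | ({j | b j ≠ w j} : Finset ι) = s} = (Fintype.card α - 1) ^ #s := by
  have hpi : ({w : ι → α | ({j | b j ≠ w j} : Finset ι) = s} : Finset (ι → α)) =
      Fintype.piFinset fun j => if j ∈ s then univ.erase (b j) else {b j} := by
    ext w
    simp only [mem_filter, mem_univ, true_and, Fintype.mem_piFinset, Finset.ext_iff]
    refine forall_congr' fun j => ?_
    split_ifs with hj <;> simp [hj, eq_comm]
  rw [hpi, Fintype.card_piFinset]
  simp [apply_ite card, card_erase_of_mem, prod_ite_mem]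

theorem card_filter_hammingDist_eq (b : ι → α) (i : ℕ) :
    #{w : ι → α | hammingDist b w = i} =
      (Fintype.card ι).choose i * (Fintype.card α - 1) ^ i := by
  rw [card_eq_sum_card_fiberwise (f := fun w => ({j | b j ≠ w j} : Finset ι))
    (t := powersetCard i univ) fun w hw => by simpa [hammingDist] using hw]
  rw [sum_congr rfl fun s hs => ?_, sum_const, card_powersetCard, card_univ, smul_eq_mul]
  rw [mem_powersetCard] at hs
  rw [filter_filter, ← hs.2, ← card_filter_disagreement_eq b s]
  congr 1
  refine filter_congr fun w _ => ?_
  simp only [hammingDist, and_iff_right_iff_imp]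
  rintro rfl
  rfl

end Hamming

theorem V_pos (q n R : ℕ) : 0 < V q n R :=
  (by simp : 0 < (q - 1) ^ 0 * n.choose 0).trans_le <|
    single_le_sum (f := fun i => (q - 1) ^ i * n.choose i) (fun _ _ => Nat.zero_le _) (by simp)

theorem card_filter_hammingDist_le (q n R : ℕ) (b : Fin n → Fin q) :
    #{w | hammingDist b w ≤ R} = V q n R := by
  rw [card_eq_sum_card_fiberwise (f := fun w => hammingDist b w) (t := range (R + 1))
    fun w hw => by simpa [Nat.lt_succ_iff] using hw]
  refine sum_congr rfl fun i hi => ?_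
  have hiR : i ≤ R := Nat.lt_succ_iff.1 (mem_range.1 hi)
  rw [filter_filter, filter_congr fun w _ => and_iff_right_of_imp fun h => h.trans_le hiR,
    card_filter_hammingDist_eq]
  simp [mul_comm]

theorem V_le_pow {q : ℕ} (hq : 0 < q) (n R : ℕ) : V q n R ≤ q ^ n := by
  simpa using (card_filter_hammingDist_le q n R fun _ => ⟨0, hq⟩).symm.trans_le (card_le_univ _)

/- First moment method: summed over all `m`-tuples `T`, the number of `b` missed by every `T i`
is `∑ b, #{t | ¬ p b t} ^ m`. -/
theorem exists_tuple_card_uncovered_mul_le {W U : Type*} [Fintype W] [Fintype U] [Nonempty U]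
    (p : W → U → Prop) [∀ b t, Decidable (p b t)] {v : ℕ} (hv : ∀ b, v ≤ #{t | p b t})
    (m : ℕ) :
    ∃ T : Fin m → U, #{b | ∀ i, ¬ p b (T i)} * Fintype.card U ^ m ≤
      Fintype.card W * (Fintype.card U - v) ^ m := by
  classical
  have hmiss (b : W) : #{T : Fin m → U | ∀ i, ¬ p b (T i)} ≤ (Fintype.card U - v) ^ m := by
    have hpi : ({T : Fin m → U | ∀ i, ¬ p b (T i)} : Finset _) =
        Fintype.piFinset fun _ => ({t | ¬ p b t} : Finset U) := by
      ext T
      simp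
    rw [hpi, Fintype.card_piFinset, prod_const, card_univ, Fintype.card_fin, filter_not,
      card_sdiff_of_subset (filter_subset _ _), card_univ]
    gcongr
    exact hv b
  have hsum : ∑ T : Fin m → U, #{b | ∀ i, ¬ p b (T i)} ≤
      Fintype.card W * (Fintype.card U - v) ^ m := by
    simp only [card_filter]
    rw [sum_comm]
    calc _ ≤ ∑ _b : W, (Fintype.card U - v) ^ m := sum_le_sum fun b _ => by
            simpa only [card_filter] using hmiss b
      _ = _ := by simp
  obtain ⟨T, -, hT⟩ := exists_le_of_sum_le (s := univ) univ_nonempty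
    (f := fun T : Fin m → U => #{b | ∀ i, ¬ p b (T i)} * Fintype.card U ^ m)
    (g := fun _ => Fintype.card W * (Fintype.card U - v) ^ m) (by
      rw [← sum_mul, sum_const, card_univ, Fintype.card_fun, Fintype.card_fin, smul_eq_mul,
        mul_comm]
      gcongr)
  exact ⟨T, hT⟩

theorem exists_finset_card_uncovered_le (q s R m : ℕ) (hq : 0 < q) :
    ∃ T : Finset (Fin s → Fin q), #T ≤ m ∧
      (#{b | ∀ t ∈ T, R < hammingDist b t} : ℝ) ≤ q ^ s * (1 - V q s R / q ^ s) ^ m := by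
  have : Nonempty (Fin q) := ⟨⟨0, hq⟩⟩
  obtain ⟨T, hT⟩ := exists_tuple_card_uncovered_mul_le
    (fun b t : Fin s → Fin q => hammingDist b t ≤ R)
    (fun b => (card_filter_hammingDist_le q s R b).ge) m
  refine ⟨univ.image T, card_image_le.trans (by simp), ?_⟩
  have hN : (0 : ℝ) < q ^ s := by positivity
  simp only [Fintype.card_fun, Fintype.card_fin, not_le] at hT
  simp only [mem_image, mem_univ, true_and, forall_exists_index, forall_apply_eq_imp_iff]
  rw [one_sub_div hN.ne', div_pow, mul_div_assoc', le_div_iff₀ (by positivity)]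
  have hVle : V q s R ≤ q ^ s := V_le_pow hq s R
  exact_mod_cast hT

theorem finite_setOf_density (q n R : ℕ) :
    {d : ℝ | ∃ K : Finset (Fin n → Fin q), IsCoveringCode q n R K ∧
      d = (K.card : ℝ) * (V q n R : ℝ) / (q : ℝ) ^ n}.Finite :=
  (Set.finite_range fun K : Finset (Fin n → Fin q) => (#K : ℝ) * V q n R / (q : ℝ) ^ n).subset
    fun _ ⟨K, _, hd⟩ => ⟨K, hd.symm⟩

theorem mu_le_of_isCoveringCode {q n R : ℕ} {K : Finset (Fin n → Fin q)}
    (hK : IsCoveringCode q n R K) : mu q n R ≤ #K * V q n R / (q : ℝ) ^ n :=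
  csInf_le (finite_setOf_density q n R).bddBelow ⟨K, hK, rfl⟩

theorem exists_isCoveringCode_mu_eq (q n R : ℕ) :
    ∃ K : Finset (Fin n → Fin q), IsCoveringCode q n R K ∧
      mu q n R = #K * V q n R / (q : ℝ) ^ n :=
  Set.Nonempty.csInf_mem (by exact ⟨_, univ, fun z => ⟨z, mem_univ z, by simp⟩, rfl⟩)
    (finite_setOf_density q n R)

theorem hammingDist_append {r s : ℕ} {α : Type*} [DecidableEq α] (a c : Fin r → α)
    (b d : Fin s → α) :
    hammingDist (Fin.append a b) (Fin.append c d) = hammingDist a c + hammingDist b d := by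
  simp only [hammingDist, card_filter, Fin.sum_univ_add, Fin.append_left, Fin.append_right]

theorem exists_isCoveringCode_append {q r s R : ℕ} {K₀ : Finset (Fin r → Fin q)}
    (hK₀ : IsCoveringCode q r R K₀) (T : Finset (Fin s → Fin q)) :
    ∃ K : Finset (Fin (r + s) → Fin q), IsCoveringCode q (r + s) R K ∧
      #K ≤ q ^ r * #T + #K₀ * #{b | ∀ t ∈ T, R < hammingDist b t} := by
  set B : Finset (Fin s → Fin q) := {b | ∀ t ∈ T, R < hammingDist b t}
  refine ⟨(univ ×ˢ T ∪ K₀ ×ˢ B).image fun p => Fin.append p.1 p.2, fun z => ?_, ?_⟩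
  · obtain ⟨u, w, rfl⟩ : ∃ u w, z = Fin.append u w :=
      ⟨_, _, Fin.append_castAdd_natAdd.symm⟩
    by_cases h : ∃ t ∈ T, hammingDist w t ≤ R
    · obtain ⟨t, ht, hd⟩ := h
      refine ⟨Fin.append u t, mem_image.2 ⟨(u, t), ?_, rfl⟩, by simpa [hammingDist_append]⟩
      exact mem_union_left _ (mem_product.2 ⟨mem_univ u, ht⟩)
    · push Not at h
      obtain ⟨k, hk, hd⟩ := hK₀ u
      refine ⟨Fin.append k w, mem_image.2 ⟨(k, w), ?_, rfl⟩, by simpa [hammingDist_append]⟩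
      exact mem_union_right _ (mem_product.2 ⟨hk, by simpa [B]⟩)
  · calc _ ≤ #(univ ×ˢ T ∪ K₀ ×ˢ B) := card_image_le
      _ ≤ _ := (card_union_le _ _).trans (by simp [card_product])

theorem one_sub_pow_floor_div_le_exp {a : ℝ} (x : ℝ) (ha : 0 < a) (ha1 : a ≤ 1) :
    (1 - a) ^ ⌊x / a⌋₊ ≤ Real.exp (-x + a) := by
  have hx : x < (⌊x / a⌋₊ + 1) * a := (div_lt_iff₀ ha).1 (Nat.lt_floor_add_one _)
  calc (1 - a) ^ ⌊x / a⌋₊ ≤ Real.exp (-a) ^ ⌊x / a⌋₊ :=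
        pow_le_pow_left₀ (by linarith) (Real.one_sub_le_exp_neg a) _
    _ = Real.exp (⌊x / a⌋₊ * -a) := (Real.exp_nat_mul _ _).symm
    _ ≤ Real.exp (-x + a) := Real.exp_le_exp.2 (by linarith)

theorem mu_add_le (q r s R : ℕ) (hq : 0 < q) {x : ℝ} (hx : 0 ≤ x) :
    mu q (r + s) R ≤ x * V q (r + s) R / V q s R
      + Real.exp (-x + V q s R / (q : ℝ) ^ s) * mu q r R * V q (r + s) R / V q r R := by
  set a : ℝ := V q s R / (q : ℝ) ^ s with ha
  set m := ⌊x / a⌋₊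
  have hVs := V_pos q s R
  have hVr := V_pos q r R
  have ha0 : 0 < a := by positivity
  have ha1 : a ≤ 1 := (div_le_one (by positivity)).2 (by exact_mod_cast V_le_pow hq s R)
  have hm : m * a ≤ x := (le_div_iff₀ ha0).1 (Nat.floor_le (by positivity))
  obtain ⟨K₀, hK₀, hμ⟩ := exists_isCoveringCode_mu_eq q r R
  obtain ⟨T, hT, hB⟩ := exists_finset_card_uncovered_le q s R m hq
  obtain ⟨K, hK, hKcard⟩ := exists_isCoveringCode_append hK₀ T
  have hcard : (#K : ℝ) ≤ q ^ r * m + #K₀ * (q ^ s * Real.exp (-x + a)) :=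
    calc (#K : ℝ) ≤ q ^ r * #T + #K₀ * #{b | ∀ t ∈ T, R < hammingDist b t} := by
          exact_mod_cast hKcard
      _ ≤ _ := by
        gcongr
        exact hB.trans (by gcongr; exact one_sub_pow_floor_div_le_exp x ha0 ha1)
  calc mu q (r + s) R ≤ #K * V q (r + s) R / (q : ℝ) ^ (r + s) := mu_le_of_isCoveringCode hK
    _ ≤ (q ^ r * m + #K₀ * (q ^ s * Real.exp (-x + a))) * V q (r + s) R /
          (q : ℝ) ^ (r + s) := by
        gcongr
    _ = m * a * V q (r + s) R / V q s R
          + Real.exp (-x + a) * (#K₀ * V q r R / (q : ℝ) ^ r) * V q (r + s) R / V q r R := by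
        rw [ha]
        field_simp
        ring
    _ ≤ _ := by
        rw [hμ]
        gcongr

theorem mu_recursive_bound_general (q n R : ℕ) (hq : 2 ≤ q)
    (y x : ℝ) (hy : 1 < y) (hx : 0 < x) (r : ℕ) (hr : r = ⌊(n : ℝ) / y⌋₊) :
    mu q n R ≤ x * (V q n R : ℝ) / (V q (n - r) R : ℝ)
      + Real.exp (-x + (V q (n - r) R : ℝ) / (q : ℝ) ^ (n - r)) * mu q r R
          * (V q n R : ℝ) / (V q r R : ℝ) := by
  obtain ⟨s, rfl⟩ : ∃ s, n = r + s :=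
    Nat.exists_eq_add_of_le (hr ▸ Nat.floor_le_of_le (div_le_self n.cast_nonneg hy.le))
  rw [Nat.add_sub_cancel_left]
  exact mu_add_le q r s R (by omega) hx.le

/-- the key recursive density inequality. -/
theorem mu_recursive_bound (q n R : ℕ) (hq : 2 ≤ q) (hn : 1 ≤ n) (hR : 1 ≤ R)
    (y x : ℝ) (hy : 1 < y) (hx : 0 < x) (r : ℕ) (hr : r = ⌊(n : ℝ) / y⌋₊) (hr1 : 1 ≤ r) :
    mu q n R ≤ x * (V q n R : ℝ) / (V q (n - r) R : ℝ)
      + Real.exp (-x + (V q (n - r) R : ℝ) / (q : ℝ) ^ (n - r)) * mu q r R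
          * (V q n R : ℝ) / (V q r R : ℝ) :=
  mu_recursive_bound_general q n R hq y x hy hx r hr
end

section
/- For every integer R ≥ 6, (R·log(R·log R + 1) + 2·log R)·(1 + 1/(R² - 1)) < R·(log R + log log R + 0.8), where log denotes the natural logarithm. -/
/-! With `L = log R` and `l = log L`, the bound `log (y + 1) ≤ log y + 1 / y` at `y = R L` gives
`log (R log R + 1) ≤ L + l + 1 / (R L)`, so after multiplying by `R² - 1` the claim reduces to the
polynomial inequality `(2L + 1/L) R² + R (L + l) < 0.8 R (R² - 1)`. This follows from
`l ≤ L - 1`, `7/4 ≤ L` and the tangent-line bound `L ≤ log 6 + R / 6 - 1 ≤ 4/5 + R / 6`, the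
estimates on `log 6` coming from those on `log 2` and `log 3`. -/

namespace Real

lemma log_six_gt : 7 / 4 < log 6 := by
  rw [show (6 : ℝ) = 2 * 3 by norm_num, log_mul two_ne_zero three_ne_zero]
  linarith [log_two_gt_d9, log_three_gt_d9]

lemma log_six_lt : log 6 < 9 / 5 := by
  rw [show (6 : ℝ) = 2 * 3 by norm_num, log_mul two_ne_zero three_ne_zero]
  linarith [log_two_lt_d9, log_three_lt_d9]

lemma log_le_log_add_div_sub_one {a x : ℝ} (ha : 0 < a) (hx : 0 < x) :
    log x ≤ log a + x / a - 1 := by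
  have h := log_le_sub_one_of_pos (div_pos hx ha)
  rw [log_div hx.ne' ha.ne'] at h
  linarith

lemma log_add_one_le_log_add_inv {y : ℝ} (hy : 0 < y) : log (y + 1) ≤ log y + y⁻¹ := by
  have h := log_le_log_add_div_sub_one hy (by linarith : 0 < y + 1)
  rw [add_div, div_self hy.ne', one_div] at h
  linarith

end Real

open Real

lemma numeric_ineq_of_log_bounds {x L l y : ℝ} (hx : 6 ≤ x) (hL : 7 / 4 ≤ L)
    (hL' : L ≤ 4 / 5 + x / 6) (hl : l ≤ L - 1) (hy : y ≤ L + l + (x * L)⁻¹) :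
    (x * y + 2 * L) * (1 + 1 / (x ^ 2 - 1)) < x * (L + l + 0.8) := by
  have hx2 : 0 < x ^ 2 - 1 := by nlinarith
  have hL0 : 0 < L := by linarith
  have hxy : x * y ≤ x * (L + l) + L⁻¹ := by
    have h := mul_le_mul_of_nonneg_left hy (by linarith : 0 ≤ x)
    rwa [mul_add, mul_inv, ← mul_assoc, mul_inv_cancel₀ (by linarith), one_mul] at h
  have hinv : L⁻¹ ≤ 4 / 7 := by
    rw [inv_le_comm₀ hL0 (by norm_num)]
    linarith
  rw [show 1 + 1 / (x ^ 2 - 1) = x ^ 2 / (x ^ 2 - 1) by field_simp; ring, ← mul_div_assoc,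
    div_lt_iff₀ hx2]
  nlinarith [mul_le_mul_of_nonneg_left hxy (sq_nonneg x)]

lemma numeric_ineq_real {x : ℝ} (hx : 6 ≤ x) :
    (x * log (x * log x + 1) + 2 * log x) * (1 + 1 / (x ^ 2 - 1))
      < x * (log x + log (log x) + 0.8) := by
  have hx0 : 0 < x := by linarith
  have hL : 7 / 4 ≤ log x := log_six_gt.le.trans (log_le_log (by norm_num) hx)
  have hL0 : 0 < log x := by linarith
  refine numeric_ineq_of_log_bounds hx hL ?_ (log_le_sub_one_of_pos hL0) ?_
  · linarith [log_le_log_add_div_sub_one (by norm_num : (0 : ℝ) < 6) hx0, log_six_lt]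
  · rw [← log_mul hx0.ne' hL0.ne']
    exact log_add_one_le_log_add_inv (mul_pos hx0 hL0)

/-- numerical inequality for integers `R ≥ 6`. -/
theorem numeric_ineq (R : ℕ) (hR : 6 ≤ R) :
    ((R : ℝ) * Real.log ((R : ℝ) * Real.log R + 1) + 2 * Real.log R)
        * (1 + 1 / ((R : ℝ) ^ 2 - 1))
      < (R : ℝ) * (Real.log R + Real.log (Real.log R) + 0.8) :=
  numeric_ineq_real (by exact_mod_cast hR)
end
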